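/- Let J be an adapted complex structure on a finite simple graph G. If v is an isolated vertex of G, then Jv or −Jv is either a vertex of even degree or a distinguished edge. -/

import Mathlib

/-!  Framework: the 2-step nilpotent Lie algebra `𝔫_G` associated to a finite simple
graph `G` (Dani–Mainkar construction), and adapted complex structures on it. -/

open scoped BigOperators

namespace GraphLie

variable {V : Type*} [Fintype V] [LinearOrder V]

/-- The underlying real vector space of the Lie algebra `𝔫_G` associated to a graph `G`:
real-valued functions on its basis `V ⊕ G.edgeSet` (vertices and edges). -/
abbrev Niln (G : SimpleGraph V) : Type _ := (V ⊕ G.edgeSet) → ℝ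

variable (G : SimpleGraph V) [DecidableRel G.Adj]

/-- The basis vector of `𝔫_G` corresponding to the vertex `v`. -/
noncomputable def vtx (v : V) : Niln G := Pi.single (Sum.inl v) 1

/-- The basis vector of `𝔫_G` corresponding to the edge `e`. -/
noncomputable def edg (e : G.edgeSet) : Niln G := Pi.single (Sum.inr e) 1

/-- The basis vector of `𝔫_G` corresponding to a vertex or an edge. -/
noncomputable def basisVec (b : V ⊕ G.edgeSet) : Niln G := Pi.single b 1

/-- The bracket of two vertex generators: for adjacent vertices `i < j` (with respect to
the chosen labeling of the vertices) `[v_i, v_j] = e_{i,j}` and `[v_j, v_i] = -e_{i,j}`;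
non-adjacent vertices commute. -/
noncomputable def bracketVtx (i j : V) : Niln G :=
  if h : G.Adj i j then
    (if i < j then edg G ⟨s(i, j), G.mem_edgeSet.mpr h⟩
     else - edg G ⟨s(i, j), G.mem_edgeSet.mpr h⟩)
  else 0

/-- The Lie bracket of `𝔫_G`, extended bilinearly from the generators; all the
edge generators are central. -/
noncomputable def bracket (x y : Niln G) : Niln G :=
  ∑ i : V, ∑ j : V, (x (Sum.inl i) * y (Sum.inl j)) • bracketVtx G i j

/-- An adapted complex structure on the graph `G`: a linear endomorphism `J` of `𝔫_G`
with `J ∘ J = -id`, whose Nijenhuis tensor vanishes, and which sends each basis vector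
(vertex or edge) to plus or minus a basis vector. -/
structure AdaptedCS : Type _ where
  J : Niln G →ₗ[ℝ] Niln G
  j_squared : ∀ x, J (J x) = -x
  integrable : ∀ x y,
    bracket G x y + J (bracket G (J x) y + bracket G x (J y)) - bracket G (J x) (J y) = 0
  adapted : ∀ b : V ⊕ G.edgeSet,
    (∃ b', J (basisVec G b) = basisVec G b') ∨ (∃ b', J (basisVec G b) = - basisVec G b')

variable {G}

/-- An edge of `G` joining vertices `v` and `w` is distinguished if `Jv = w` or `Jw = v`. -/
def AdaptedCS.Distinguished (Jc : AdaptedCS G) (e : G.edgeSet) : Prop :=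
  ∃ v w : V, (e : Sym2 V) = s(v, w) ∧
    (Jc.J (vtx G v) = vtx G w ∨ Jc.J (vtx G w) = vtx G v)

end GraphLie

/-! An adapted `J` sends each basis vector `b` of `V ⊕ E` to `±` a basis vector `π b`
(`basisPerm`), and `J² = -1` makes `π` a fixed-point-free involution. Let `v` be isolated, so
`[v, ·] = 0`.

If `π v = w` is a vertex, the identity `N_J(v, u) = 0` reduces to `J [Jv, u] = [Jv, Ju]`; for a
neighbour `u` of `w` the left side is nonzero, so `π u` is again a neighbour of `w`. Hence `π`
pairs off the neighbours of `w`.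

If `π v = e = {a, b}` is an edge, the `e`-coordinate of the middle term of `N_J(a, b)` is `±`
a vertex coordinate of a bracket, hence `0`; so `[Ja, Jb]` has nonzero `e`-coordinate. This forces
`Ja = ± p`, `Jb = ± q` with `{p, q} = {a, b}`, and `p ≠ a` since `π` has no fixed points. -/

theorem Finset.even_card_of_involution {α : Type*} {s : Finset α} (f : α → α)
    (hf_mem : ∀ a ∈ s, f a ∈ s) (hf_ne : ∀ a ∈ s, f a ≠ a) (hf : ∀ a ∈ s, f (f a) = a) :
    Even s.card := by
  rw [← ZMod.natCast_eq_zero_iff_even, Finset.card_eq_sum_ones, Nat.cast_sum, Nat.cast_one]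
  exact Finset.sum_involution (fun a _ ↦ f a) (fun _ _ ↦ by decide) (fun a ha _ ↦ hf_ne a ha)
    hf_mem hf

namespace GraphLie

section

variable {V : Type*} [LinearOrder V] {G : SimpleGraph V}

@[simp]
theorem basisVec_inl (v : V) : basisVec G (Sum.inl v) = vtx G v := rfl

@[simp]
theorem basisVec_inr (e : G.edgeSet) : basisVec G (Sum.inr e) = edg G e := rfl

theorem basisVec_apply (b c : V ⊕ G.edgeSet) : basisVec G b c = if c = b then 1 else 0 :=
  Pi.single_apply b 1 c

variable [DecidableRel G.Adj]

theorem bracketVtx_apply_inl (i j k : V) : bracketVtx G i j (Sum.inl k) = 0 := by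
  unfold bracketVtx edg
  split_ifs <;> simp

theorem bracketVtx_apply_inr_ne_zero_iff (i j : V) (e : G.edgeSet) :
    bracketVtx G i j (Sum.inr e) ≠ 0 ↔ (e : Sym2 V) = s(i, j) := by
  unfold bracketVtx edg
  split_ifs with hij
  · simp [Pi.single_apply, Subtype.ext_iff]
  · simp [Pi.single_apply, Subtype.ext_iff]
  · simp only [Pi.zero_apply, ne_eq, not_true_eq_false, false_iff]
    exact fun he ↦ hij (G.mem_edgeSet.1 (he ▸ e.2))

theorem bracketVtx_ne_zero_iff (i j : V) : bracketVtx G i j ≠ 0 ↔ G.Adj i j := by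
  refine ⟨fun h ↦ by_contra fun hij ↦ h (dif_neg hij), fun hij h ↦ ?_⟩
  exact (bracketVtx_apply_inr_ne_zero_iff i j ⟨s(i, j), hij⟩).2 rfl (by rw [h]; rfl)

end

variable {V : Type*} [Fintype V] [LinearOrder V] {G : SimpleGraph V} [DecidableRel G.Adj]

theorem bracket_apply_inl (x y : Niln G) (k : V) : bracket G x y (Sum.inl k) = 0 := by
  simp [bracket, Finset.sum_apply, bracketVtx_apply_inl]

theorem bracket_smul_left (c : ℝ) (x y : Niln G) :
    bracket G (c • x) y = c • bracket G x y := by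
  simp [bracket, Finset.smul_sum, smul_smul, mul_assoc]

theorem bracket_smul_right (c : ℝ) (x y : Niln G) :
    bracket G x (c • y) = c • bracket G x y := by
  simp [bracket, Finset.smul_sum, smul_smul, mul_left_comm]

theorem bracket_basisVec_basisVec (b c : V ⊕ G.edgeSet) :
    bracket G (basisVec G b) (basisVec G c) =
      Sum.elim (fun i ↦ Sum.elim (fun j ↦ bracketVtx G i j) 0 c) 0 b := by
  rcases b with i | e <;> rcases c with j | f <;>
    simp [bracket, basisVec_apply, Finset.sum_ite_eq']

theorem bracket_vtx_vtx (i j : V) : bracket G (vtx G i) (vtx G j) = bracketVtx G i j :=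
  bracket_basisVec_basisVec (Sum.inl i) (Sum.inl j)

theorem exists_eq_inl_of_bracket_basisVec_ne_zero {b c : V ⊕ G.edgeSet}
    (h : bracket G (basisVec G b) (basisVec G c) ≠ 0) :
    ∃ p q : V, b = Sum.inl p ∧ c = Sum.inl q := by
  rw [bracket_basisVec_basisVec] at h
  rcases b with p | _ <;> rcases c with q | _
  · exact ⟨p, q, rfl, rfl⟩
  all_goals simp at h

theorem bracket_vtx_left_eq_zero_of_degree_eq_zero {v : V} (hv : G.degree v = 0)
    (y : Niln G) : bracket G (vtx G v) y = 0 := by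
  have hadj : ∀ j, ¬ G.Adj v j := fun j h ↦ (G.degree_eq_zero_iff_notMem_support v).1 hv ⟨j, h⟩
  refine Finset.sum_eq_zero fun i _ ↦ Finset.sum_eq_zero fun j _ ↦ ?_
  rcases eq_or_ne i v with rfl | hiv
  · rw [bracketVtx, dif_neg (hadj j), smul_zero]
  · simp [vtx, hiv]

namespace AdaptedCS

variable (Jc : AdaptedCS G)

theorem J_eq_zero_iff {x : Niln G} : Jc.J x = 0 ↔ x = 0 := by
  refine ⟨fun h ↦ ?_, fun h ↦ h ▸ map_zero Jc.J⟩
  simpa [h] using Jc.j_squared x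

theorem exists_J_basisVec_eq_smul (b : V ⊕ G.edgeSet) :
    ∃ c : V ⊕ G.edgeSet, ∃ ε : ℝ, (ε = 1 ∨ ε = -1) ∧ Jc.J (basisVec G b) = ε • basisVec G c := by
  rcases Jc.adapted b with ⟨c, hc⟩ | ⟨c, hc⟩
  · exact ⟨c, 1, .inl rfl, by rw [hc, one_smul]⟩
  · exact ⟨c, -1, .inr rfl, by rw [hc, neg_one_smul]⟩

noncomputable def basisPerm (b : V ⊕ G.edgeSet) : V ⊕ G.edgeSet :=
  (Jc.exists_J_basisVec_eq_smul b).choose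

noncomputable def basisSign (b : V ⊕ G.edgeSet) : ℝ :=
  (Jc.exists_J_basisVec_eq_smul b).choose_spec.choose

theorem basisSign_eq_one_or (b : V ⊕ G.edgeSet) : Jc.basisSign b = 1 ∨ Jc.basisSign b = -1 :=
  (Jc.exists_J_basisVec_eq_smul b).choose_spec.choose_spec.1

theorem basisSign_ne_zero (b : V ⊕ G.edgeSet) : Jc.basisSign b ≠ 0 := by
  rcases Jc.basisSign_eq_one_or b with h | h <;> norm_num [h]

theorem J_basisVec (b : V ⊕ G.edgeSet) :
    Jc.J (basisVec G b) = Jc.basisSign b • basisVec G (Jc.basisPerm b) :=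
  (Jc.exists_J_basisVec_eq_smul b).choose_spec.choose_spec.2

theorem J_basisVec_eq_or_eq_neg (b : V ⊕ G.edgeSet) :
    Jc.J (basisVec G b) = basisVec G (Jc.basisPerm b) ∨
      Jc.J (basisVec G b) = - basisVec G (Jc.basisPerm b) := by
  rcases Jc.basisSign_eq_one_or b with h | h <;> simp [J_basisVec, h]

theorem basisPerm_basisPerm_and_basisSign_mul (b : V ⊕ G.edgeSet) :
    Jc.basisPerm (Jc.basisPerm b) = b ∧ Jc.basisSign b * Jc.basisSign (Jc.basisPerm b) = -1 := by
  have h := congrFun (Jc.j_squared (basisVec G b)) b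
  rw [J_basisVec, map_smul, J_basisVec, smul_smul] at h
  by_cases hb : Jc.basisPerm (Jc.basisPerm b) = b
  · simp_all [basisVec_apply]
  · simp [basisVec_apply, Ne.symm hb] at h

theorem basisPerm_involutive : Function.Involutive Jc.basisPerm :=
  fun b ↦ (Jc.basisPerm_basisPerm_and_basisSign_mul b).1

theorem basisPerm_ne (b : V ⊕ G.edgeSet) : Jc.basisPerm b ≠ b := by
  intro hb
  have h := (Jc.basisPerm_basisPerm_and_basisSign_mul b).2
  rw [hb] at h
  nlinarith [mul_self_nonneg (Jc.basisSign b)]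

theorem J_apply_basisPerm (x : Niln G) (b : V ⊕ G.edgeSet) :
    Jc.J x (Jc.basisPerm b) = Jc.basisSign b * x b := by
  have hx : x = ∑ c, x c • basisVec G c := pi_eq_sum_univ' x
  conv_lhs => rw [hx, map_sum, Finset.sum_apply]
  simp [J_basisVec, basisVec_apply, Jc.basisPerm_involutive.injective.eq_iff, mul_comm]

theorem J_bracket_J_vtx_of_degree_eq_zero {v : V} (hv : G.degree v = 0) (y : Niln G) :
    Jc.J (bracket G (Jc.J (vtx G v)) y) = bracket G (Jc.J (vtx G v)) (Jc.J y) := by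
  have h := Jc.integrable (vtx G v) y
  rwa [bracket_vtx_left_eq_zero_of_degree_eq_zero hv,
    bracket_vtx_left_eq_zero_of_degree_eq_zero hv, zero_add, add_zero, sub_eq_zero] at h

theorem exists_basisPerm_eq_inl_adj {v w u : V} (hv : G.degree v = 0)
    (hw : Jc.basisPerm (Sum.inl v) = Sum.inl w) (hu : G.Adj w u) :
    ∃ u', Jc.basisPerm (Sum.inl u) = Sum.inl u' ∧ G.Adj w u' := by
  have h := Jc.J_bracket_J_vtx_of_degree_eq_zero hv (vtx G u)
  rw [← basisVec_inl v, ← basisVec_inl u, J_basisVec, J_basisVec, hw, bracket_smul_left,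
    bracket_smul_left, bracket_smul_right, map_smul, smul_smul] at h
  have hne : bracket G (vtx G w) (basisVec G (Jc.basisPerm (Sum.inl u))) ≠ 0 := by
    intro h0
    rw [basisVec_inl, h0, smul_zero, smul_eq_zero, J_eq_zero_iff, basisVec_inl, bracket_vtx_vtx]
      at h
    exact h.elim (Jc.basisSign_ne_zero _) ((bracketVtx_ne_zero_iff w u).2 hu)
  obtain ⟨p, q, hp, hq⟩ := exists_eq_inl_of_bracket_basisVec_ne_zero hne
  cases hp
  rw [hq, basisVec_inl, bracket_vtx_vtx, bracketVtx_ne_zero_iff] at hne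
  exact ⟨q, hq, hne⟩

theorem even_degree_of_basisPerm_eq_inl {v w : V} (hv : G.degree v = 0)
    (hw : Jc.basisPerm (Sum.inl v) = Sum.inl w) : Even (G.degree w) := by
  rw [← G.card_neighborFinset_eq_degree, ← Finset.card_map Function.Embedding.inl]
  refine Finset.even_card_of_involution Jc.basisPerm ?_ (fun b _ ↦ Jc.basisPerm_ne b)
    (fun b _ ↦ Jc.basisPerm_involutive b)
  simp only [Finset.mem_map, Function.Embedding.inl_apply, SimpleGraph.mem_neighborFinset,
    forall_exists_index, and_imp]
  rintro _ u hu rfl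
  obtain ⟨u', hu', hwu'⟩ := Jc.exists_basisPerm_eq_inl_adj hv hw hu
  exact ⟨u', hwu', hu'.symm⟩

theorem distinguished_of_basisPerm_inl_eq {a b : V} {e : G.edgeSet}
    (hab : (e : Sym2 V) = s(a, b)) (h : Jc.basisPerm (Sum.inl a) = Sum.inl b) :
    Jc.Distinguished e := by
  refine ⟨a, b, hab, ?_⟩
  rcases Jc.J_basisVec_eq_or_eq_neg (Sum.inl a) with ha | ha <;>
    rw [h, basisVec_inl, basisVec_inl] at ha
  · exact .inl ha
  · right
    rw [← neg_neg (vtx G b), ← ha, map_neg, Jc.j_squared, neg_neg]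

theorem distinguished_of_basisPerm_eq_inr {v : V} {e : G.edgeSet}
    (he : Jc.basisPerm (Sum.inl v) = Sum.inr e) : Jc.Distinguished e := by
  obtain ⟨⟨a, b⟩, hab⟩ := Sym2.mk_surjective (e : Sym2 V)
  replace hab : (e : Sym2 V) = s(a, b) := hab.symm
  have hcoord : bracket G (Jc.J (vtx G a)) (Jc.J (vtx G b)) (Sum.inr e) ≠ 0 := by
    have h := congrFun (Jc.integrable (vtx G a) (vtx G b)) (Sum.inr e)
    -- `e = π v`, so the `e`-coordinate of `J (…)` is `±` its `v`-coordinate, which vanishes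
    rw [← he] at h
    simp only [Pi.add_apply, Pi.sub_apply, Pi.zero_apply, J_apply_basisPerm, bracket_apply_inl,
      add_zero, mul_zero] at h
    rw [he, sub_eq_zero] at h
    rw [← h, bracket_vtx_vtx, bracketVtx_apply_inr_ne_zero_iff]
    exact hab
  rw [← basisVec_inl a, ← basisVec_inl b, J_basisVec, J_basisVec, bracket_smul_left,
    bracket_smul_right] at hcoord
  have hne : bracket G (basisVec G (Jc.basisPerm (Sum.inl a)))
      (basisVec G (Jc.basisPerm (Sum.inl b))) ≠ 0 := fun h0 ↦ hcoord (by simp [h0])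
  obtain ⟨p, q, hp, hq⟩ := exists_eq_inl_of_bracket_basisVec_ne_zero hne
  rw [hp, hq, basisVec_inl, basisVec_inl, bracket_vtx_vtx] at hcoord
  simp only [Pi.smul_apply, smul_eq_mul, ne_eq, mul_eq_zero, not_or] at hcoord
  have hpq := (bracketVtx_apply_inr_ne_zero_iff p q e).1 hcoord.2.2
  rw [hab] at hpq
  rcases Sym2.eq_iff.1 hpq with ⟨rfl, -⟩ | ⟨-, rfl⟩
  · exact absurd hp (Jc.basisPerm_ne _)
  · exact Jc.distinguished_of_basisPerm_inl_eq hab hp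

end AdaptedCS

/-- If `v` is an isolated vertex of `G`, then `Jv` or `-Jv` is either a
vertex of even degree or a distinguished edge. -/
theorem statement5 (Jc : AdaptedCS G) (v : V) (hv : G.degree v = 0) :
    (∃ w : V, Even (G.degree w) ∧
        (Jc.J (vtx G v) = vtx G w ∨ Jc.J (vtx G v) = - vtx G w)) ∨
    (∃ e : G.edgeSet, Jc.Distinguished e ∧
        (Jc.J (vtx G v) = edg G e ∨ Jc.J (vtx G v) = - edg G e)) := by
  have hJv := Jc.J_basisVec_eq_or_eq_neg (Sum.inl v)
  rcases h : Jc.basisPerm (Sum.inl v) with w | e <;>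
    rw [h] at hJv <;> simp only [basisVec_inl, basisVec_inr] at hJv
  · exact .inl ⟨w, Jc.even_degree_of_basisPerm_eq_inl hv h, hJv⟩
  · exact .inr ⟨e, Jc.distinguished_of_basisPerm_eq_inr h, hJv⟩

end GraphLie
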